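/- arXiv:0904.0283 — 4 statements merged into one kernel-verified Lean document; each statement's English description precedes it below -/
import Mathlib

section
/- Let G be a group and ℓ ≥ 1 an integer. The normal closure in the direct power G^ℓ of the image of the diagonal homomorphism Δ : G → G^ℓ, Δ(g) = (g, g, …, g), equals the kernel of the composite homomorphism G^ℓ → (G^{ab})^ℓ → (G^{ab})^ℓ / D, where G^{ab} is the abelianization of G, the first map is the ℓ-fold product of the abelianization map, and D is the image of the diagonal embedding of G^{ab} into (G^{ab})^ℓ. -/
/-- The ℓ-fold diagonal homomorphism `G → G^ℓ`. -/
def diagHom (G : Type*) [Group G] (ℓ : ℕ) : G →* (Fin ℓ → G) where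
  toFun g := fun _ => g
  map_one' := rfl
  map_mul' _ _ := rfl

/-- The ℓ-fold product of the abelianization map `G^ℓ → (Gᵃᵇ)^ℓ`. -/
def abPow (G : Type*) [Group G] (ℓ : ℕ) :
    (Fin ℓ → G) →* (Fin ℓ → Abelianization G) where
  toFun x := fun i => Abelianization.of (x i)
  map_one' := by funext i; simp
  map_mul' _ _ := by funext i; simp

open scoped commutatorElement

/-- The normal closure in `G^ℓ` of the image of the diagonal `G → G^ℓ` equals
the kernel of the composite `G^ℓ → (Gᵃᵇ)^ℓ → (Gᵃᵇ)^ℓ / D`, where `D` is the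
diagonal copy of `Gᵃᵇ`. -/
theorem stmt_0 (G : Type*) [Group G] (ℓ : ℕ) (hℓ : 1 ≤ ℓ)
    (D : Subgroup (Fin ℓ → Abelianization G))
    (hD : D = (diagHom (Abelianization G) ℓ).range) :
    Subgroup.normalClosure ((diagHom G ℓ).range : Set (Fin ℓ → G)) =
      ((QuotientGroup.mk' D).comp (abPow G ℓ)).ker := by
  set N := Subgroup.normalClosure ((diagHom G ℓ).range : Set (Fin ℓ → G)) with hN
  have hNnormal : N.Normal := Subgroup.normalClosure_normal
  -- single-coordinate commutators lie in N
  have hsingle : ∀ (i : Fin ℓ) (b : G), b ∈ commutator G →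
      Pi.mulSingle i b ∈ N := by
    intro i b hb
    have : commutator G ≤ N.comap (MonoidHom.mulSingle (fun _ : Fin ℓ => G) i) := by
      rw [commutator, Subgroup.commutator_le]
      intro p _ q _
      have h1 : Pi.mulSingle i ⁅p, q⁆ =
          ⁅(Pi.mulSingle i p : Fin ℓ → G), diagHom G ℓ q⁆ := by
        funext j
        by_cases hj : j = i
        · subst hj
          simp [commutatorElement_def, diagHom, Pi.mulSingle_apply]
        · simp [commutatorElement_def, Pi.mulSingle_apply, hj, diagHom]
      have hd : diagHom G ℓ q ∈ N :=
        Subgroup.subset_normalClosure ⟨q, rfl⟩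
      have : ⁅(Pi.mulSingle i p : Fin ℓ → G), diagHom G ℓ q⁆ ∈ N := by
        rw [commutatorElement_def]
        exact N.mul_mem (hNnormal.conj_mem _ hd _) (N.inv_mem hd)
      simpa only [Subgroup.mem_comap, MonoidHom.mulSingle_apply, h1] using this
    exact this hb
  apply le_antisymm
  · apply Subgroup.normalClosure_le_normal
    rintro _ ⟨g, rfl⟩
    simp only [SetLike.mem_coe, MonoidHom.mem_ker, MonoidHom.comp_apply,
      QuotientGroup.mk'_apply, QuotientGroup.eq_one_iff, hD]
    exact ⟨Abelianization.of g, rfl⟩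
  · intro x hx
    simp only [MonoidHom.mem_ker, MonoidHom.comp_apply, QuotientGroup.mk'_apply,
      QuotientGroup.eq_one_iff, hD, MonoidHom.mem_range] at hx
    obtain ⟨a, ha⟩ := hx
    have ha' : ∀ i, Abelianization.of (x i) = a := by
      intro i
      have := congrFun ha i
      simpa [diagHom, abPow] using this.symm
    set i0 : Fin ℓ := ⟨0, hℓ⟩
    set g : G := x i0 with hg
    have hag : a = Abelianization.of g := (ha' i0).symm
    set y : Fin ℓ → G := x * (diagHom G ℓ g)⁻¹ with hy
    have hyc : ∀ i, y i ∈ commutator G := by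
      intro i
      have h1 : Abelianization.of (y i) = 1 := by
        have : y i = x i * g⁻¹ := rfl
        rw [this, map_mul, map_inv, ha' i, hag, mul_inv_cancel]
      exact (QuotientGroup.eq_one_iff _).mp h1
    have hyN : y ∈ N := by
      rw [← Finset.noncommProd_mulSingle y]
      exact Subgroup.noncommProd_mem N _ (fun i _ => hsingle i (y i) (hyc i))
    have hxeq : x = y * diagHom G ℓ g := by
      rw [hy, inv_mul_cancel_right]
    rw [hxeq]
    exact N.mul_mem hyN (Subgroup.subset_normalClosure ⟨g, rfl⟩)
end

section
/- Let Λ = ℤ³ with basis L, E₁, E₂ and symmetric bilinear form given by L² = 1, E₁² = E₂² = −1, and all other pairings of basis vectors zero. Let G be the group of isometries φ of Λ such that ⟨φ(L), L⟩ > 0 (φ preserves the positive cone). Then G is generated by the three isometries: s₁ swapping E₁ and E₂ and fixing L; s₂ sending E₂ to −E₂ and fixing L, E₁; and s₀* the reflection x ↦ x + 2⟨x,S⟩S in the class S = L − E₁ − E₂ (which has S² = −1). -/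
namespace Stmt9

/-- The intersection form of `(S²×S²)#(CP²-bar)` in the basis `L, E₁, E₂`:
`diag(1, −1, −1)`. -/
def B (x y : Fin 3 → ℤ) : ℤ := x 0 * y 0 - x 1 * y 1 - x 2 * y 2

/-- The class `L`. -/
def L : Fin 3 → ℤ := ![1, 0, 0]

/-- `s₁`: swap `E₁` and `E₂`, fix `L`. -/
def s₁ : (Fin 3 → ℤ) ≃ₗ[ℤ] (Fin 3 → ℤ) where
  toFun x := ![x 0, x 2, x 1]
  invFun x := ![x 0, x 2, x 1]
  map_add' x y := by funext i; fin_cases i <;> simp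
  map_smul' c x := by funext i; fin_cases i <;> simp
  left_inv x := by funext i; fin_cases i <;> simp
  right_inv x := by funext i; fin_cases i <;> simp

/-- `s₂`: send `E₂` to `−E₂`, fix `L` and `E₁`. -/
def s₂ : (Fin 3 → ℤ) ≃ₗ[ℤ] (Fin 3 → ℤ) where
  toFun x := ![x 0, x 1, -x 2]
  invFun x := ![x 0, x 1, -x 2]
  map_add' x y := by funext i; fin_cases i <;> simp <;> ring
  map_smul' c x := by funext i; fin_cases i <;> simp <;> ring
  left_inv x := by funext i; fin_cases i <;> simp
  right_inv x := by funext i; fin_cases i <;> simp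

/-- `s₀*`: the reflection `x ↦ x + 2⟨x,S⟩S` in the class `S = L − E₁ − E₂`
(of square −1), written out in coordinates; here `⟨x,S⟩ = x₀ + x₁ + x₂`. -/
def s₀ : (Fin 3 → ℤ) ≃ₗ[ℤ] (Fin 3 → ℤ) where
  toFun x := ![x 0 + 2 * (x 0 + x 1 + x 2),
               x 1 - 2 * (x 0 + x 1 + x 2),
               x 2 - 2 * (x 0 + x 1 + x 2)]
  invFun x := ![x 0 + 2 * (x 0 + x 1 + x 2),
                x 1 - 2 * (x 0 + x 1 + x 2),
                x 2 - 2 * (x 0 + x 1 + x 2)]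
  map_add' x y := by funext i; fin_cases i <;> simp <;> ring
  map_smul' c x := by funext i; fin_cases i <;> simp <;> ring
  left_inv x := by funext i; fin_cases i <;> simp <;> ring
  right_inv x := by funext i; fin_cases i <;> simp <;> ring

abbrev G := (Fin 3 → ℤ) ≃ₗ[ℤ] (Fin 3 → ℤ)
abbrev C : Subgroup G := Subgroup.closure {s₁, s₂, s₀}

lemma s₁_apply (x : Fin 3 → ℤ) : s₁ x = ![x 0, x 2, x 1] := rfl
lemma s₂_apply (x : Fin 3 → ℤ) : s₂ x = ![x 0, x 1, -x 2] := rfl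
lemma s₀_apply (x : Fin 3 → ℤ) : s₀ x = ![x 0 + 2 * (x 0 + x 1 + x 2),
               x 1 - 2 * (x 0 + x 1 + x 2),
               x 2 - 2 * (x 0 + x 1 + x 2)] := rfl
lemma mul_apply (f g : G) (x : Fin 3 → ℤ) : (f * g) x = f (g x) := rfl

lemma Bs₁ (x y : Fin 3 → ℤ) : B (s₁ x) (s₁ y) = B x y := by simp [B, s₁_apply]; try ring
lemma Bs₂ (x y : Fin 3 → ℤ) : B (s₂ x) (s₂ y) = B x y := by simp [B, s₂_apply]; try ring
lemma Bs₀ (x y : Fin 3 → ℤ) : B (s₀ x) (s₀ y) = B x y := by simp [B, s₀_apply]; try ring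

lemma B_L (x : Fin 3 → ℤ) : B x L = x 0 := by simp [B, L]
lemma B_L' (x : Fin 3 → ℤ) : B L x = x 0 := by simp [B, L]
lemma B_LL : B L L = 1 := by simp [B, L]

lemma pos0 (x y : Fin 3 → ℤ) (hx : 0 < B x x) (hy : 0 < B y y) (hxy : 0 < B x y)
    (hy0 : 0 < y 0) : 0 < x 0 := by
  simp only [B] at *
  nlinarith [sq_nonneg (x 1 * y 2 - x 2 * y 1), sq_nonneg (x 1 * y 1 + x 2 * y 2),
    mul_pos hxy hy0, sq_nonneg (x 0 * y 0 - x 1 * y 1 - x 2 * y 2)]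

lemma hs₁C : s₁ ∈ C := Subgroup.subset_closure (by simp)
lemma hs₂C : s₂ ∈ C := Subgroup.subset_closure (by simp)
lemma hs₀C : s₀ ∈ C := Subgroup.subset_closure (by simp)

def E1 : Fin 3 → ℤ := ![0,1,0]
def E2 : Fin 3 → ℤ := ![0,0,1]

lemma eqext (f g : G) (h0 : f L = g L) (h1 : f E1 = g E1) (h2 : f E2 = g E2) : f = g := by
  apply LinearEquiv.toLinearMap_injective
  apply LinearMap.ext
  intro x
  have hx : x = x 0 • L + x 1 • E1 + x 2 • E2 := by
    funext i; fin_cases i <;> simp [L, E1, E2]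
  show f x = g x
  rw [hx]
  simp only [map_add, map_smul, h0, h1, h2]

-- backward direction
lemma backward (φ : G) (h : φ ∈ C) :
    (∀ x y, B (φ x) (φ y) = B x y) ∧ 0 < B (φ L) L := by
  have hsub : C ≤ {
      carrier := {ψ : G | (∀ x y, B (ψ x) (ψ y) = B x y) ∧ 0 < B (ψ L) L},
      one_mem' := ⟨fun x y => rfl, by rw [show ((1:G) L) = L from rfl, B_LL]; norm_num⟩,
      mul_mem' := by
        rintro a b ⟨haI, haL⟩ ⟨hbI, hbL⟩
        refine ⟨fun x y => by rw [mul_apply, mul_apply, haI, hbI], ?_⟩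
        rw [mul_apply, B_L]
        have h1 : 0 < B (b L) (b L) := by rw [hbI]; rw [B_LL]; norm_num
        have h2 : 0 < B (a (b L)) (a (b L)) := by rw [haI]; exact h1
        have h3 : 0 < B (a (b L)) (a L) := by rw [haI, B_L]; rwa [B_L] at hbL
        have h4 : 0 < (a L) 0 := by rwa [B_L] at haL
        have h5 : 0 < B (a L) (a L) := by rw [haI, B_LL]; norm_num
        exact pos0 _ _ h2 h5 h3 h4
      inv_mem' := by
        rintro a ⟨haI, haL⟩
        have hInv : ∀ x y, B (a⁻¹ x) (a⁻¹ y) = B x y := by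
          intro x y
          have := haI (a⁻¹ x) (a⁻¹ y)
          rw [show a (a⁻¹ x) = x from a.apply_symm_apply x,
            show a (a⁻¹ y) = y from a.apply_symm_apply y] at this
          exact this.symm
        refine ⟨hInv, ?_⟩
        have : B (a⁻¹ L) L = B L (a L) := by
          conv_lhs => rw [← haI, show a (a⁻¹ L) = L from a.apply_symm_apply L]
        rw [this, B_L']
        rwa [B_L] at haL } := by
    apply Subgroup.closure_le _ |>.mpr
    rintro g hg
    simp only [Set.mem_insert_iff, Set.mem_singleton_iff] at hg
    rcases hg with rfl | rfl | rfl
    · exact ⟨Bs₁, by rw [B_L, s₁_apply]; norm_num [L]⟩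
    · exact ⟨Bs₂, by rw [B_L, s₂_apply]; norm_num [L]⟩
    · exact ⟨Bs₀, by rw [B_L, s₀_apply, L]; norm_num; decide⟩
  exact hsub h

set_option maxHeartbeats 2000000 in
lemma base (φ : G) (hI : ∀ x y, B (φ x) (φ y) = B x y) (hφL : φ L = L) : φ ∈ C := by
  have h10 : φ E1 0 = 0 := by
    have h := hI E1 L
    rw [hφL, B_L] at h
    rw [h]; simp [B, E1, L]
  have h20 : φ E2 0 = 0 := by
    have h := hI E2 L
    rw [hφL, B_L] at h
    rw [h]; simp [B, E2, L]
  obtain ⟨p, hp⟩ : ∃ p, φ E1 1 = p := ⟨_, rfl⟩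
  obtain ⟨q, hq⟩ : ∃ q, φ E1 2 = q := ⟨_, rfl⟩
  obtain ⟨r, hr⟩ : ∃ r, φ E2 1 = r := ⟨_, rfl⟩
  obtain ⟨t, ht⟩ : ∃ t, φ E2 2 = t := ⟨_, rfl⟩
  have hpq : p * p + q * q = 1 := by
    have h := hI E1 E1
    simp only [B, h10, hp, hq] at h
    simp [E1] at h; linarith
  have hrt : r * r + t * t = 1 := by
    have h := hI E2 E2
    simp only [B, h20, hr, ht] at h
    simp [E2] at h; linarith
  have hort : p * r + q * t = 0 := by
    have h := hI E1 E2
    simp only [B, h10, hp, hq, hr, ht] at h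
    simp [E1, E2] at h; linarith
  have hE1 : φ E1 = ![0, p, q] := by funext i; fin_cases i <;> simp [h10, hp, hq]
  have hE2 : φ E2 = ![0, r, t] := by funext i; fin_cases i <;> simp [h20, hr, ht]
  have hp1 : -1 ≤ p := by nlinarith
  have hp2 : p ≤ 1 := by nlinarith
  have hq1 : -1 ≤ q := by nlinarith
  have hq2 : q ≤ 1 := by nlinarith
  have hr1 : -1 ≤ r := by nlinarith
  have hr2 : r ≤ 1 := by nlinarith
  have ht1 : -1 ≤ t := by nlinarith
  have ht2 : t ≤ 1 := by nlinarith
  interval_cases p <;> interval_cases q <;> interval_cases r <;> interval_cases t <;>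
    first
      | omega
      | · -- (p,q,r,t)=(-1,0,0,-1) : negate both
          have hW : φ = s₂*s₁*s₂*s₁ := by
            refine eqext _ _ ?_ ?_ ?_ <;> simp only [hφL, hE1, hE2] <;>
              (funext i; fin_cases i <;> simp [mul_apply, s₁_apply, s₂_apply, L, E1, E2])
          rw [hW]; exact mul_mem (mul_mem (mul_mem hs₂C hs₁C) hs₂C) hs₁C
      | · -- (-1,0,0,1): negate first
          have hW : φ = s₁*s₂*s₁ := by
            refine eqext _ _ ?_ ?_ ?_ <;> simp only [hφL, hE1, hE2] <;>
              (funext i; fin_cases i <;> simp [mul_apply, s₁_apply, s₂_apply, L, E1, E2])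
          rw [hW]; exact mul_mem (mul_mem hs₁C hs₂C) hs₁C
      | · -- (0,-1,-1,0)
          have hW : φ = s₂*s₁*s₂ := by
            refine eqext _ _ ?_ ?_ ?_ <;> simp only [hφL, hE1, hE2] <;>
              (funext i; fin_cases i <;> simp [mul_apply, s₁_apply, s₂_apply, L, E1, E2])
          rw [hW]; exact mul_mem (mul_mem hs₂C hs₁C) hs₂C
      | · -- (0,-1,1,0)
          have hW : φ = s₂*s₁ := by
            refine eqext _ _ ?_ ?_ ?_ <;> simp only [hφL, hE1, hE2] <;>
              (funext i; fin_cases i <;> simp [mul_apply, s₁_apply, s₂_apply, L, E1, E2])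
          rw [hW]; exact mul_mem hs₂C hs₁C
      | · -- (0,1,-1,0)
          have hW : φ = s₁*s₂ := by
            refine eqext _ _ ?_ ?_ ?_ <;> simp only [hφL, hE1, hE2] <;>
              (funext i; fin_cases i <;> simp [mul_apply, s₁_apply, s₂_apply, L, E1, E2])
          rw [hW]; exact mul_mem hs₁C hs₂C
      | · -- (0,1,1,0)
          have hW : φ = s₁ := by
            refine eqext _ _ ?_ ?_ ?_ <;> simp only [hφL, hE1, hE2] <;>
              (funext i; fin_cases i <;> simp [s₁_apply, L, E1, E2])
          rw [hW]; exact hs₁C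
      | · -- (1,0,0,-1)
          have hW : φ = s₂ := by
            refine eqext _ _ ?_ ?_ ?_ <;> simp only [hφL, hE1, hE2] <;>
              (funext i; fin_cases i <;> simp [s₂_apply, L, E1, E2])
          rw [hW]; exact hs₂C
      | · -- (1,0,0,1)
          have hW : φ = 1 := by
            refine eqext _ _ ?_ ?_ ?_ <;> simp only [hφL, hE1, hE2] <;>
              (funext i; fin_cases i <;> simp [L, E1, E2])
          rw [hW]; exact one_mem _

lemma step (n : ℕ)
    (ih : ∀ m, m < n → ∀ ψ : G, (∀ x y, B (ψ x) (ψ y) = B x y) → ψ L 0 = (m:ℤ)+1 → ψ ∈ C)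
    (φ g : G) (hI : ∀ x y, B (φ x) (φ y) = B x y)
    (hgI : ∀ x y, B (g x) (g y) = B x y) (hgC : g ∈ C) (hφa : φ L 0 = (n:ℤ)+1)
    (hpos : 0 < g (φ L) 0) (hlt : g (φ L) 0 < φ L 0) : φ ∈ C := by
  have hψI : ∀ x y, B ((g*φ) x) ((g*φ) y) = B x y := fun x y => by
    rw [mul_apply, mul_apply, hgI, hI]
  obtain ⟨m, hm⟩ : ∃ m : ℕ, g (φ L) 0 = (m:ℤ) + 1 := ⟨(g (φ L) 0 - 1).toNat, by omega⟩
  have hmlt : m < n := by omega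
  have hψ : (g*φ) ∈ C := ih m hmlt _ hψI (by rw [mul_apply]; exact hm)
  have hfactor : φ = g⁻¹ * (g * φ) := by group
  rw [hfactor]; exact mul_mem (inv_mem hgC) hψ

set_option maxHeartbeats 1600000 in
lemma key : ∀ n : ℕ, ∀ φ : G, (∀ x y, B (φ x) (φ y) = B x y) → φ L 0 = (n:ℤ) + 1 → φ ∈ C := by
  intro n
  induction n using Nat.strong_induction_on with
  | _ n ih =>
  intro φ hI ha
  obtain ⟨a, hA⟩ : ∃ A, φ L 0 = A := ⟨_, rfl⟩
  obtain ⟨b, hB⟩ : ∃ A, φ L 1 = A := ⟨_, rfl⟩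
  obtain ⟨c, hC⟩ : ∃ A, φ L 2 = A := ⟨_, rfl⟩
  have hq : a * a - b * b - c * c = 1 := by
    have h := hI L L
    rw [B_LL] at h
    simp only [B, hA, hB, hC] at h
    exact h
  rcases Nat.eq_zero_or_pos n with rfl | hn
  · -- a = 1, so b = c = 0 and φ L = L
    have ha1 : a = 1 := by rw [hA] at ha; omega
    subst ha1
    have hb0 : b = 0 := by nlinarith
    have hc0 : c = 0 := by nlinarith
    have hφL : φ L = L := by
      funext i; fin_cases i
      · show φ L 0 = L 0; rw [hA]; simp [L]
      · show φ L 1 = L 1; rw [hB, hb0]; simp [L]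
      · show φ L 2 = L 2; rw [hC, hc0]; simp [L]
    exact base φ hI hφL
  · -- descent
    have ha2 : 2 ≤ a := by rw [hA] at ha; omega
    have hbne : b ≠ 0 := by
      intro h; rw [h] at hq
      have h1 : c < a := by nlinarith
      have h2 : -a < c := by nlinarith
      have h5 : c * c ≤ (a-1)*(a-1) := by nlinarith
      nlinarith
    have hcne : c ≠ 0 := by
      intro h; rw [h] at hq
      have h1 : b < a := by nlinarith
      have h2 : -a < b := by nlinarith
      have h5 : b * b ≤ (a-1)*(a-1) := by nlinarith
      nlinarith
    rcases le_or_gt b 0 with hb | hb <;> rcases le_or_gt c 0 with hc | hc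
    · -- b < 0, c < 0 : g = s₀
      have hb1 : b ≤ -1 := by omega
      have hc1 : c ≤ -1 := by omega
      refine step n ih φ s₀ hI Bs₀ hs₀C ha ?_ ?_
      · rw [s₀_apply]
        simp only [Matrix.cons_val_zero, hA, hB, hC]
        nlinarith [sq_nonneg (b - c), (by linarith : (0:ℤ) < -2*b - 2*c)]
      · rw [s₀_apply]
        simp only [Matrix.cons_val_zero, hA, hB, hC]
        nlinarith [mul_pos (by linarith : (0:ℤ) < -b) (by linarith : (0:ℤ) < -c),
          (by linarith : (0:ℤ) < -b - c)]
    · -- b < 0, c > 0 : g = s₀ * s₂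
      have hb1 : b ≤ -1 := by omega
      have hc1 : 1 ≤ c := by omega
      refine step n ih φ (s₀ * s₂) hI
        (fun x y => by rw [mul_apply, mul_apply, Bs₀, Bs₂]) (mul_mem hs₀C hs₂C) ha ?_ ?_
      · rw [mul_apply, s₂_apply, s₀_apply]
        simp only [Matrix.cons_val_zero, Matrix.cons_val_one, Matrix.head_cons,
          Matrix.cons_val_two, Matrix.tail_cons, hA, hB, hC]
        nlinarith [sq_nonneg (b + c), (by linarith : (0:ℤ) < -2*b + 2*c)]
      · rw [mul_apply, s₂_apply, s₀_apply]
        simp only [Matrix.cons_val_zero, Matrix.cons_val_one, Matrix.head_cons,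
          Matrix.cons_val_two, Matrix.tail_cons, hA, hB, hC]
        nlinarith [mul_pos (by linarith : (0:ℤ) < -b) (by linarith : (0:ℤ) < c),
          (by linarith : (0:ℤ) < -b + c)]
    · -- b > 0, c < 0 : g = s₀ * (s₁ * s₂ * s₁)
      have hb1 : 1 ≤ b := by omega
      have hc1 : c ≤ -1 := by omega
      refine step n ih φ (s₀ * (s₁ * s₂ * s₁)) hI
        (fun x y => by rw [mul_apply, mul_apply, mul_apply, mul_apply, mul_apply, mul_apply,
          Bs₀, Bs₁, Bs₂, Bs₁]) (mul_mem hs₀C (mul_mem (mul_mem hs₁C hs₂C) hs₁C)) ha ?_ ?_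
      · rw [mul_apply, mul_apply, mul_apply, s₁_apply, s₂_apply, s₁_apply, s₀_apply]
        simp only [Matrix.cons_val_zero, Matrix.cons_val_one, Matrix.head_cons,
          Matrix.cons_val_two, Matrix.tail_cons, hA, hB, hC]
        nlinarith [sq_nonneg (b + c), (by linarith : (0:ℤ) < 2*b - 2*c)]
      · rw [mul_apply, mul_apply, mul_apply, s₁_apply, s₂_apply, s₁_apply, s₀_apply]
        simp only [Matrix.cons_val_zero, Matrix.cons_val_one, Matrix.head_cons,
          Matrix.cons_val_two, Matrix.tail_cons, hA, hB, hC]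
        nlinarith [mul_pos (by linarith : (0:ℤ) < b) (by linarith : (0:ℤ) < -c),
          (by linarith : (0:ℤ) < b - c)]
    · -- b > 0, c > 0 : g = s₀ * (s₁ * s₂ * s₁) * s₂
      have hb1 : 1 ≤ b := by omega
      have hc1 : 1 ≤ c := by omega
      refine step n ih φ (s₀ * (s₁ * s₂ * s₁) * s₂) hI
        (fun x y => by rw [mul_apply, mul_apply, mul_apply, mul_apply, mul_apply, mul_apply,
          mul_apply, mul_apply, Bs₀, Bs₁, Bs₂, Bs₁, Bs₂])
        (mul_mem (mul_mem hs₀C (mul_mem (mul_mem hs₁C hs₂C) hs₁C)) hs₂C) ha ?_ ?_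
      · rw [mul_apply, mul_apply, mul_apply, mul_apply, s₂_apply, s₁_apply, s₂_apply,
            s₁_apply, s₀_apply]
        simp only [Matrix.cons_val_zero, Matrix.cons_val_one, Matrix.head_cons,
          Matrix.cons_val_two, Matrix.tail_cons, hA, hB, hC]
        nlinarith [sq_nonneg (b - c), (by linarith : (0:ℤ) < 2*b + 2*c)]
      · rw [mul_apply, mul_apply, mul_apply, mul_apply, s₂_apply, s₁_apply, s₂_apply,
            s₁_apply, s₀_apply]
        simp only [Matrix.cons_val_zero, Matrix.cons_val_one, Matrix.head_cons,
          Matrix.cons_val_two, Matrix.tail_cons, hA, hB, hC]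
        nlinarith [mul_pos (by linarith : (0:ℤ) < b) (by linarith : (0:ℤ) < c),
          (by linarith : (0:ℤ) < b + c)]

/-- The group of isometries of `(ℤ³, diag(1,−1,−1))` preserving the positive
cone (i.e. with `⟨φ(L), L⟩ > 0`) is generated by `s₁`, `s₂` and the reflection
`s₀*` in `L − E₁ − E₂`: an automorphism satisfies these two conditions iff it
lies in the subgroup generated by the three given isometries. -/
theorem stmt_9 (φ : (Fin 3 → ℤ) ≃ₗ[ℤ] (Fin 3 → ℤ)) :
    ((∀ x y, B (φ x) (φ y) = B x y) ∧ 0 < B (φ L) L) ↔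
      φ ∈ Subgroup.closure {s₁, s₂, s₀} := by
  constructor
  · rintro ⟨hI, hL⟩
    rw [B_L] at hL
    exact key (φ L 0 - 1).toNat φ hI (by omega)
  · exact backward φ

end Stmt9
end

section
/- Let ℓ ≥ 1 and let Λ = ℤ^{ℓ+2} with basis F, Y, E₁, …, E_ℓ and the symmetric bilinear form of the previous setting (F² = Y² = 0, ⟨F,Y⟩ = 1, Eᵢ² = −1, all other basis pairings zero). Suppose v₁, …, v_ℓ ∈ Λ satisfy ⟨vᵢ, F⟩ = 0, ⟨vᵢ, vᵢ⟩ = −1 for every i, and ⟨vᵢ, vⱼ⟩ = 0 for i ≠ j. Then there exist a permutation σ of {1,…,ℓ}, signs εᵢ ∈ {±1} and integers kᵢ such that vᵢ = εᵢ E_{σ(i)} + kᵢ F for every i. -/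
namespace Stmt12

/-- The lattice of the ℓ-fold blow-up of a ruled surface, with coordinates
(F-coefficient, Y-coefficient, E-coefficients). -/
abbrev Λ (ℓ : ℕ) := ℤ × ℤ × (Fin ℓ → ℤ)

/-- The intersection form: `F² = Y² = 0`, `⟨F,Y⟩ = 1`, `Eᵢ² = −1`, all other
basis pairings zero. -/
def B (ℓ : ℕ) (x y : Λ ℓ) : ℤ :=
  x.1 * y.2.1 + x.2.1 * y.1 - ∑ i, x.2.2 i * y.2.2 i

/-- The fibre class `F`. -/
def F (ℓ : ℕ) : Λ ℓ := (1, 0, 0)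

/-- The exceptional classes `Eᵢ`. -/
def E (ℓ : ℕ) (i : Fin ℓ) : Λ ℓ := (0, 0, Pi.single i 1)

lemma unit_vec {n : ℕ} (w : Fin n → ℤ) (h : ∑ k, w k * w k = 1) :
    ∃ j, (w j = 1 ∨ w j = -1) ∧ ∀ m, m ≠ j → w m = 0 := by
  have hnn : ∀ k ∈ Finset.univ, 0 ≤ w k * w k := fun k _ => mul_self_nonneg _
  have hex : ∃ j, w j ≠ 0 := by
    by_contra hc
    push_neg at hc
    simp [hc] at h
  obtain ⟨j, hj⟩ := hex
  have h1 : 1 ≤ w j * w j := by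
    have := Int.one_le_abs (by simpa using hj)
    nlinarith [abs_nonneg (w j), sq_abs (w j)]
  have hle : w j * w j ≤ 1 := h ▸ Finset.single_le_sum hnn (Finset.mem_univ j)
  have hjj : w j * w j = 1 := le_antisymm hle h1
  refine ⟨j, mul_self_eq_one_iff.mp hjj, fun m hm => ?_⟩
  have hsplit : ∑ k, w k * w k = w j * w j + ∑ k ∈ Finset.univ.erase j, w k * w k :=
    (Finset.add_sum_erase _ _ (Finset.mem_univ j)).symm
  have hz : ∑ k ∈ Finset.univ.erase j, w k * w k = 0 := by omega
  have := (Finset.sum_eq_zero_iff_of_nonneg (fun k _ => mul_self_nonneg (w k))).mp hz m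
    (Finset.mem_erase.mpr ⟨hm, Finset.mem_univ m⟩)
  nlinarith [this]

/-- Classification of orthogonal systems of (−1)-classes orthogonal to the
fibre class `F`: any family `v₁, …, v_ℓ` with `⟨vᵢ,F⟩ = 0`, `⟨vᵢ,vᵢ⟩ = −1` and
`⟨vᵢ,vⱼ⟩ = 0` for `i ≠ j` has the form `vᵢ = εᵢ E_{σ(i)} + kᵢ F` for a
permutation `σ`, signs `εᵢ = ±1`, and integers `kᵢ`. -/
theorem stmt_12 (ℓ : ℕ) (hℓ : 1 ≤ ℓ) (v : Fin ℓ → Λ ℓ)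
    (hF : ∀ i, B ℓ (v i) (F ℓ) = 0)
    (hsq : ∀ i, B ℓ (v i) (v i) = -1)
    (horth : ∀ i j, i ≠ j → B ℓ (v i) (v j) = 0) :
    ∃ (σ : Equiv.Perm (Fin ℓ)) (ε k : Fin ℓ → ℤ),
      (∀ i, ε i = 1 ∨ ε i = -1) ∧
      ∀ i, v i = ε i • E ℓ (σ i) + k i • F ℓ := by
  set w : Fin ℓ → Fin ℓ → ℤ := fun i => (v i).2.2 with hw
  have hY : ∀ i, (v i).2.1 = 0 := by
    intro i
    have := hF i
    simpa [B, F] using this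
  have hwsq : ∀ i, ∑ k, w i k * w i k = 1 := by
    intro i
    have := hsq i
    rw [B, hY i] at this
    simp only [hw]
    omega
  have hchoice : ∀ i, ∃ j, (w i j = 1 ∨ w i j = -1) ∧ ∀ m, m ≠ j → w i m = 0 :=
    fun i => unit_vec (w i) (hwsq i)
  choose jf hε hzero using hchoice
  have hinj : Function.Injective jf := by
    intro a b hab
    by_contra hne
    have h0 := horth a b hne
    rw [B, hY a, hY b] at h0
    have hsum : ∑ k, w a k * w b k = w a (jf a) * w b (jf a) := by
      rw [Finset.sum_eq_single (jf a)]
      · intro m _ hm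
        rw [hzero a m hm, zero_mul]
      · intro h; exact absurd (Finset.mem_univ _) h
    have h1 : w a (jf a) * w b (jf a) = 0 := by
      simp only [hw] at hsum ⊢
      omega
    have hb' := hε b
    rw [← hab] at hb'
    rcases hε a with ha | ha <;> rcases hb' with hb | hb <;>
      rw [ha, hb] at h1 <;> norm_num at h1
  let σ : Equiv.Perm (Fin ℓ) := Equiv.ofBijective jf ⟨hinj, Finite.surjective_of_injective hinj⟩
  refine ⟨σ, fun i => w i (jf i), fun i => (v i).1, fun i => hε i, fun i => ?_⟩
  have hσ : σ i = jf i := rfl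
  refine Prod.ext ?_ (Prod.ext ?_ ?_)
  · simp [E, F, hσ]
  · simp [E, F, hσ, hY i]
  · funext m
    simp only [E, F, hσ, Prod.snd_add, Prod.smul_snd, Prod.snd, Pi.add_apply, Pi.smul_apply,
      smul_eq_mul, mul_zero]
    by_cases hm : m = jf i
    · subst hm
      simp [hw]
    · rw [Pi.single_eq_of_ne hm]
      have := hzero i m hm
      simp only [hw] at this
      simp [this]

end Stmt12
end

section
/- Let q ∈ {1, 2, 3}, let k ≥ 2 be an integer, and let m₁ ≥ m₂ ≥ … ≥ m_ℓ ≥ 0 be integers (ℓ ≥ 3). Then it is impossible that all three of the following hold simultaneously: (a) m₁² + m₂² + … + m_ℓ² = k² + q; (b) k ≥ m₁ + m₂ + m₃; (c) m₁ + m₂ + … + m_ℓ ≤ 3k + q − 1. -/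
/-- Seiberg–Witten numerical obstruction for spheres of square −1, −2 or −3:
for `q ∈ {1,2,3}`, `k ≥ 2`, `ℓ ≥ 3` and integers `m₁ ≥ m₂ ≥ … ≥ m_ℓ ≥ 0`, one
cannot simultaneously have `Σmᵢ² = k² + q`, `m₁ + m₂ + m₃ ≤ k`, and
`Σmᵢ ≤ 3k + q − 1`. -/
theorem stmt_15 (q k : ℤ) (hq : q = 1 ∨ q = 2 ∨ q = 3) (hk : 2 ≤ k)
    (ℓ : ℕ) (hℓ : 3 ≤ ℓ) (m : Fin ℓ → ℤ)
    (hmono : ∀ i j : Fin ℓ, i ≤ j → m j ≤ m i)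
    (hnonneg : ∀ i, 0 ≤ m i) :
    ¬ ((∑ i, (m i) ^ 2 = k ^ 2 + q) ∧
       (m ⟨0, by omega⟩ + m ⟨1, by omega⟩ + m ⟨2, by omega⟩ ≤ k) ∧
       (∑ i, m i ≤ 3 * k + q - 1)) := by
  rintro ⟨hsq, htop, hsum⟩
  have hq13 : 1 ≤ q ∧ q ≤ 3 := by rcases hq with h|h|h <;> omega
  have h0 : 0 < ℓ := by omega
  have h1 : 1 < ℓ := by omega
  have h2 : 2 < ℓ := by omega
  set i0 : Fin ℓ := ⟨0, h0⟩ with hi0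
  set i1 : Fin ℓ := ⟨1, h1⟩ with hi1
  set i2 : Fin ℓ := ⟨2, h2⟩ with hi2
  set a := m i0 with ha
  set b := m i1 with hb
  set c := m i2 with hc
  have htop' : a + b + c ≤ k := htop
  have hba : b ≤ a := hmono i0 i1 (by simp [hi0, hi1, Fin.le_def])
  have hcb : c ≤ b := hmono i1 i2 (by simp [hi1, hi2, Fin.le_def])
  have hc0 : 0 ≤ c := hnonneg i2
  have hcapa : ∀ i, m i ≤ a := fun i => hmono i0 i (by simp [hi0, Fin.le_def])
  -- sum over the triple {i0,i1,i2}
  have tri : ∀ f : Fin ℓ → ℤ,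
      ∑ i ∈ ({i0, i1, i2} : Finset (Fin ℓ)), f i = f i0 + f i1 + f i2 := by
    intro f
    rw [Finset.sum_insert (by simp [hi0, hi1, hi2, Fin.ext_iff]),
        Finset.sum_insert (by simp [hi1, hi2, Fin.ext_iff]),
        Finset.sum_singleton]
    ring
  have key2 : ∀ x : ℤ, ∑ i, m i * (x - m i) = x * (∑ i, m i) - ∑ i, (m i) ^ 2 := by
    intro x
    rw [Finset.mul_sum, ← Finset.sum_sub_distrib]
    exact Finset.sum_congr rfl fun i _ => by ring
  have keyB : a * (c - a) + b * (c - b) + c * (c - c) ≤ ∑ i, m i * (c - m i) := by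
    rw [← tri (fun i => m i * (c - m i))]
    apply Finset.sum_le_sum_of_subset_of_nonneg (Finset.subset_univ _)
    intro i _ hi
    simp only [Finset.mem_insert, Finset.mem_singleton, hi0, hi1, hi2, Fin.ext_iff,
      not_or] at hi
    have hile : m i ≤ c := hmono i2 i (by simp [hi2, Fin.le_def]; omega)
    exact mul_nonneg (hnonneg i) (by omega)
  have hcs : c * (∑ i, m i) ≤ c * (3 * k + q - 1) := mul_le_mul_of_nonneg_left hsum hc0
  have h2c := key2 c
  rw [hsq] at h2c
  have hF : k ^ 2 + q ≤ a ^ 2 + b ^ 2 + c * (3 * k + q - 1 - a - b) := by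
    linarith only [keyB, h2c, hcs]
  -- structural identity
  have key3 : a ^ 2 + b ^ 2 + c * (3 * k + q - 1 - a - b) - (k ^ 2 + q) =
      (q - 1) * c - q - (2 * (b - c) ^ 2 + (k - a - b - c) ^ 2 + 2 * (c * (a - b))
        + 4 * (c * (b - c)) + 3 * (c * (k - a - b - c)) + 2 * ((a - b) * (b - c))
        + 2 * ((a - b) * (k - a - b - c)) + 4 * ((b - c) * (k - a - b - c))) := by ring
  have hB1 : 0 ≤ c * (a - b) := mul_nonneg hc0 (by omega)
  have hB2 : 0 ≤ c * (b - c) := mul_nonneg hc0 (by omega)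
  have hB3 : 0 ≤ c * (k - a - b - c) := mul_nonneg hc0 (by omega)
  have hB4 : 0 ≤ (a - b) * (b - c) := mul_nonneg (by omega) (by omega)
  have hB5 : 0 ≤ (a - b) * (k - a - b - c) := mul_nonneg (by omega) (by omega)
  have hB6 : 0 ≤ (b - c) * (k - a - b - c) := mul_nonneg (by omega) (by omega)
  have hB7 : 0 ≤ (3 - q) * c := mul_nonneg (by omega) hc0
  have hBle : 2 * (b - c) ^ 2 + (k - a - b - c) ^ 2 + 2 * (c * (a - b))
        + 4 * (c * (b - c)) + 3 * (c * (k - a - b - c)) + 2 * ((a - b) * (b - c))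
        + 2 * ((a - b) * (k - a - b - c)) + 4 * ((b - c) * (k - a - b - c))
        ≤ (q - 1) * c - q := by linarith only [key3, hF]
  have hq2 : 2 ≤ q := by
    by_contra h
    have hq1 : q = 1 := by omega
    subst hq1
    linarith only [hBle, hB1, hB2, hB3, hB4, hB5, hB6, sq_nonneg (b - c),
      sq_nonneg (k - a - b - c)]
  have hc2 : 2 ≤ c := by
    by_contra h
    have e : (q - 1) * c ≤ (q - 1) * 1 :=
      mul_le_mul_of_nonneg_left (by omega : c ≤ 1) (by omega : (0:ℤ) ≤ q - 1)
    linarith only [hBle, hB1, hB2, hB3, hB4, hB5, hB6, sq_nonneg (b - c),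
      sq_nonneg (k - a - b - c), e]
  have hab : a = b := by
    by_contra h
    have e : c * 1 ≤ c * (a - b) := mul_le_mul_of_nonneg_left (by omega) hc0
    linarith only [hBle, hB2, hB3, hB4, hB5, hB6, hB7, sq_nonneg (b - c),
      sq_nonneg (k - a - b - c), e, hq13.1]
  have hbc : b = c := by
    by_contra h
    have e : c * 1 ≤ c * (b - c) := mul_le_mul_of_nonneg_left (by omega) hc0
    linarith only [hBle, hB1, hB3, hB4, hB5, hB6, hB7, sq_nonneg (b - c),
      sq_nonneg (k - a - b - c), e, hq13.1, hc0]
  have hk3 : k = 3 * c := by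
    by_contra h
    have e : c * 1 ≤ c * (k - a - b - c) := mul_le_mul_of_nonneg_left (by omega) hc0
    linarith only [hBle, hB1, hB2, hB4, hB5, hB6, hB7, sq_nonneg (b - c),
      sq_nonneg (k - a - b - c), e, hq13.1, hc0]
  -- now a = b = c, k = 3c, 2 ≤ c, 2 ≤ q ≤ 3
  have hk2 : k ^ 2 = 9 * c ^ 2 := by rw [hk3]; ring
  have hcapc : ∀ i, m i ≤ c := fun i => by have := hcapa i; omega
  have hdef : ∑ i, m i * (c - m i) ≤ (q - 1) * c - q := by
    have e1 : c * (3 * k + q - 1) = 9 * c ^ 2 + q * c - c := by rw [hk3]; ring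
    linarith only [h2c, hcs, e1, hk2]
  set M := Finset.filter (fun i : Fin ℓ => 0 < m i ∧ m i < c) Finset.univ with hM
  have hMsub : ∑ i ∈ M, m i * (c - m i) ≤ ∑ i, m i * (c - m i) :=
    Finset.sum_le_sum_of_subset_of_nonneg (Finset.filter_subset _ _)
      (fun i _ _ => mul_nonneg (hnonneg i) (by have := hcapc i; omega))
  have hMcard : (M.card : ℤ) * (c - 1) ≤ ∑ i ∈ M, m i * (c - m i) := by
    have h := Finset.card_nsmul_le_sum M (fun i => m i * (c - m i)) (c - 1) ?_
    · simpa [nsmul_eq_mul] using h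
    · intro i hi
      rw [hM, Finset.mem_filter] at hi
      show c - 1 ≤ m i * (c - m i)
      have e := mul_nonneg (show (0:ℤ) ≤ m i - 1 by omega)
        (show (0:ℤ) ≤ c - m i - 1 by omega)
      linarith only [e]
  have hcard1 : M.card ≤ 1 := by
    by_contra h
    have h2' : (2 : ℤ) ≤ (M.card : ℤ) := by exact_mod_cast (by omega : 2 ≤ M.card)
    have e : 2 * (c - 1) ≤ (M.card : ℤ) * (c - 1) :=
      mul_le_mul_of_nonneg_right h2' (by omega)
    linarith only [hMcard, hMsub, hdef, hc2, e, hq13.2,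
      mul_nonneg (show (0:ℤ) ≤ 3 - q by omega) (show (0:ℤ) ≤ c - 2 by omega)]
  have hsplit := Finset.sum_filter_add_sum_filter_not Finset.univ
    (fun i : Fin ℓ => 0 < m i ∧ m i < c) (fun i => m i ^ 2)
  have hdvd : (c ^ 2) ∣ ∑ i ∈ Finset.filter (fun i : Fin ℓ => ¬(0 < m i ∧ m i < c))
      Finset.univ, m i ^ 2 := by
    apply Finset.dvd_sum
    intro i hi
    rw [Finset.mem_filter] at hi
    have h1 := hnonneg i
    have h2' := hcapc i
    have : m i = 0 ∨ m i = c := by omega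
    rcases this with h|h <;> rw [h] <;> simp
  obtain ⟨N, hN⟩ := hdvd
  rw [hsq] at hsplit
  rcases Nat.le_one_iff_eq_zero_or_eq_one.mp hcard1 with h|h
  · -- no middle term : c² ∣ q, impossible
    have hM0 : M = ∅ := Finset.card_eq_zero.mp h
    have hr0 : ∑ i ∈ Finset.filter (fun i : Fin ℓ => 0 < m i ∧ m i < c)
        Finset.univ, m i ^ 2 = 0 := by rw [← hM, hM0]; simp
    rcases le_or_gt N 9 with h'|h'
    · linarith only [hsplit, hN, hr0, hk2, hq13.1,
        mul_nonneg (sq_nonneg c) (show (0:ℤ) ≤ 9 - N by omega)]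
    · linarith only [hsplit, hN, hr0, hk2, hq13.2, sq_nonneg (c - 2), hc2,
        mul_nonneg (sq_nonneg c) (show (0:ℤ) ≤ N - 10 by omega)]
  · -- one middle term x : q ≡ x² mod c², forces q = x², impossible
    obtain ⟨j, hj⟩ := Finset.card_eq_one.mp h
    have hjM : j ∈ M := by rw [hj]; exact Finset.mem_singleton_self j
    rw [hM, Finset.mem_filter] at hjM
    have hr : ∑ i ∈ Finset.filter (fun i : Fin ℓ => 0 < m i ∧ m i < c)
        Finset.univ, m i ^ 2 = m j ^ 2 := by rw [← hM, hj, Finset.sum_singleton]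
    have hx1 : 1 ≤ m j := hjM.2.1
    have hxc : m j ≤ c - 1 := by omega
    rcases lt_trichotomy N 9 with h'|h'|h'
    · linarith only [hsplit, hN, hr, hk2, hq13.1, hc2,
        mul_nonneg (show (0:ℤ) ≤ c - 1 - m j by omega) (show (0:ℤ) ≤ c - 1 + m j by omega),
        mul_nonneg (sq_nonneg c) (show (0:ℤ) ≤ 8 - N by omega)]
    · -- N = 9 : q = m j ^ 2
      have hqx : q = m j ^ 2 := by
        have e : k ^ 2 + q = m j ^ 2 + c ^ 2 * N := by rw [← hr, ← hN]; linarith only [hsplit]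
        rw [hk2, h'] at e; linarith only [e]
      rcases le_or_gt (m j) 1 with hx|hx
      · have e1 : m j = 1 := by omega
        rw [e1] at hqx; omega
      · linarith only [hqx, hq13.2, sq_nonneg (m j - 2), hx]
    · linarith only [hsplit, hN, hr, hk2, hq13.2, hc2, sq_nonneg (c - 2),
        sq_nonneg (m j - 1), hx1,
        mul_nonneg (sq_nonneg c) (show (0:ℤ) ≤ N - 10 by omega)]
end
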